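/- The function 𝒱₃ giving the volume of the one-sided tubular neighborhood of width c₃(A) about a surface of area A, namely 𝒱₃(A) = A·sinh(c₃(A))·cosh(c₃(A)) where coth(2c₃(A)) = A/(2π)+1, is monotone increasing in A and tends to π as A → ∞. -/

import Mathlib

open Real Filter Set Topology

noncomputable def coth (t : ℝ) : ℝ := Real.cosh t / Real.sinh t

noncomputable def r (x : ℝ) : ℝ := Real.log (coth (x / 2))

lemma coth_strictAntiOn : StrictAntiOn coth (Set.Ioi (0:ℝ)) := by
  intro x hx y hy hxy
  have hsx := Real.sinh_pos_iff.2 (Set.mem_Ioi.1 hx)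
  have hsy := Real.sinh_pos_iff.2 (Set.mem_Ioi.1 hy)
  have key : coth x - coth y = Real.sinh (y - x) / (Real.sinh x * Real.sinh y) := by
    rw [coth, coth, Real.sinh_sub]
    field_simp
  have hpos : 0 < coth x - coth y := by
    rw [key]
    exact div_pos (Real.sinh_pos_iff.2 (by linarith)) (mul_pos hsx hsy)
  linarith

lemma V_eq (c₃ : ℝ → ℝ)
    (hc₃ : ∀ A : ℝ, 0 < A → 0 < c₃ A ∧ coth (2 * c₃ A) = A / (2 * Real.pi) + 1)
    {A : ℝ} (hA : 0 < A) :
    A * Real.sinh (c₃ A) * Real.cosh (c₃ A) = Real.pi * Real.exp (-(2 * c₃ A)) := by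
  obtain ⟨hc, hcoth⟩ := hc₃ A hA
  have hπ := Real.pi_pos
  have hs : 0 < Real.sinh (2 * c₃ A) := Real.sinh_pos_iff.2 (by linarith)
  rw [coth] at hcoth
  have h2 : Real.cosh (2 * c₃ A) = (A / (2 * Real.pi) + 1) * Real.sinh (2 * c₃ A) :=
    (div_eq_iff hs.ne').1 hcoth
  have h3 : Real.cosh (2 * c₃ A) - Real.sinh (2 * c₃ A)
      = A / (2 * Real.pi) * Real.sinh (2 * c₃ A) := by rw [h2]; ring
  rw [Real.cosh_sub_sinh, Real.sinh_two_mul] at h3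
  field_simp at h3
  nlinarith [h3]

lemma c3_antitone (c₃ : ℝ → ℝ)
    (hc₃ : ∀ A : ℝ, 0 < A → 0 < c₃ A ∧ coth (2 * c₃ A) = A / (2 * Real.pi) + 1)
    {A B : ℝ} (hA : 0 < A) (hB : 0 < B) (hAB : A ≤ B) : c₃ B ≤ c₃ A := by
  obtain ⟨hcA, hcothA⟩ := hc₃ A hA
  obtain ⟨hcB, hcothB⟩ := hc₃ B hB
  have hπ := Real.pi_pos
  by_contra h
  push_neg at h
  have := coth_strictAntiOn (Set.mem_Ioi.2 (by linarith : (0:ℝ) < 2 * c₃ A))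
    (Set.mem_Ioi.2 (by linarith : (0:ℝ) < 2 * c₃ B)) (by linarith)
  rw [hcothA, hcothB] at this
  have h1 : B / (2 * Real.pi) < A / (2 * Real.pi) := by linarith
  have h2 : B < A := by
    have := (div_lt_div_iff₀ (by positivity) (by positivity)).1 h1
    nlinarith
  linarith

theorem V3_monotone_and_tendsto_pi (c₃ : ℝ → ℝ)
    (hc₃ : ∀ A : ℝ, 0 < A → 0 < c₃ A ∧ coth (2 * c₃ A) = A / (2 * Real.pi) + 1) :
    MonotoneOn (fun A : ℝ => A * Real.sinh (c₃ A) * Real.cosh (c₃ A)) (Set.Ioi 0) ∧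
      Tendsto (fun A : ℝ => A * Real.sinh (c₃ A) * Real.cosh (c₃ A)) atTop
        (nhds Real.pi) := by
  have hπ := Real.pi_pos
  constructor
  · intro A hA B hB hAB
    have hA0 : (0:ℝ) < A := Set.mem_Ioi.1 hA
    have hB0 : (0:ℝ) < B := Set.mem_Ioi.1 hB
    simp only
    rw [V_eq c₃ hc₃ hA0, V_eq c₃ hc₃ hB0]
    have hle := c3_antitone c₃ hc₃ hA0 hB0 hAB
    exact mul_le_mul_of_nonneg_left (Real.exp_le_exp.2 (by linarith)) hπ.le
  · have hc0 : Tendsto c₃ atTop (nhds 0) := by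
      rw [tendsto_order]
      constructor
      · intro a ha
        filter_upwards [eventually_gt_atTop (0:ℝ)] with A hA
        exact lt_trans ha (hc₃ A hA).1
      · intro a ha
        filter_upwards [eventually_gt_atTop (max 0 (2 * Real.pi * (coth (2 * a) - 1)))]
          with A hA
        have hA0 : 0 < A := lt_of_le_of_lt (le_max_left _ _) hA
        obtain ⟨hc, hcoth⟩ := hc₃ A hA0
        by_contra h
        push_neg at h
        have hle : coth (2 * c₃ A) ≤ coth (2 * a) := by
          rcases eq_or_lt_of_le h with he | hlt
          · rw [he]
          · exact (coth_strictAntiOn (Set.mem_Ioi.2 (by linarith))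
              (Set.mem_Ioi.2 (by linarith)) (by linarith)).le
        rw [hcoth] at hle
        have hA' : 2 * Real.pi * (coth (2 * a) - 1) < A :=
          lt_of_le_of_lt (le_max_right _ _) hA
        have h4 : A / (2 * Real.pi) ≤ coth (2 * a) - 1 := by linarith
        have h5 : A ≤ (coth (2 * a) - 1) * (2 * Real.pi) :=
          (div_le_iff₀ (by positivity)).1 h4
        linarith
    have hmain : Tendsto (fun A : ℝ => Real.pi * Real.exp (-(2 * c₃ A))) atTop
        (nhds Real.pi) := by
      have : Tendsto (fun A : ℝ => Real.exp (-(2 * c₃ A))) atTop (nhds 1) := by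
        have h1 : Tendsto (fun A : ℝ => -(2 * c₃ A)) atTop (nhds 0) := by
          have := hc0.const_mul (2:ℝ)
          simpa using this.neg
        have h2 := (Real.continuous_exp.tendsto 0).comp h1
        simpa [Function.comp_def, Real.exp_zero] using h2
      simpa using this.const_mul Real.pi
    refine hmain.congr' ?_
    filter_upwards [eventually_gt_atTop (0:ℝ)] with A hA
    exact (V_eq c₃ hc₃ hA).symm
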